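/- The Koszul-Tate differential is nilpotent: the odd derivation δ defined on generators by δφ^i_{(μ)} = 0, δφ*_{i(μ)} = ∂_{(μ)}(δL/δφ^i), δC*_{α(ν)} = ∂_{(ν)}(R†^{i}_α[φ*_i]), where R†^i_α[φ*_i] denotes the Noether operator R†^i_α applied to the antifields φ*_i, satisfies δ² = 0, as a consequence of the Noether identities R†^i_α[δL/δφ^i] = 0. -/

import Mathlib

open MvPolynomial

abbrev JetVar (ι : Type) (n : ℕ) : Type := (ι × Multiset (Fin n)) ⊕ Fin n

abbrev LocalFn (ι : Type) (n : ℕ) : Type := MvPolynomial (JetVar ι n) ℝ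

variable {ι : Type} {n : ℕ} [DecidableEq ι]

noncomputable def tD (ν : Fin n) (f : LocalFn ι n) : LocalFn ι n :=
  pderiv (Sum.inr ν) f +
    ∑ v ∈ f.vars,
      (match v with
      | Sum.inl (i, μ) => X (Sum.inl (i, ν ::ₘ μ)) * pderiv (Sum.inl (i, μ)) f
      | Sum.inr _ => 0 : LocalFn ι n)

noncomputable def tDm (μ : Multiset (Fin n)) (f : LocalFn ι n) : LocalFn ι n :=
  (μ.sort (· ≤ ·)).foldr tD f

noncomputable def EL (i : ι) (f : LocalFn ι n) : LocalFn ι n :=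
  ∑ v ∈ f.vars,
    (match v with
    | Sum.inl (j, μ) =>
        if j = i then ((-1 : ℝ) ^ Multiset.card μ) • tDm μ (pderiv (Sum.inl (j, μ)) f)
        else 0
    | Sum.inr _ => 0 : LocalFn ι n)

noncomputable def evQ (Q : ι → LocalFn ι n) (f : LocalFn ι n) : LocalFn ι n :=
  ∑ v ∈ f.vars,
    (match v with
    | Sum.inl (i, μ) => tDm μ (Q i) * pderiv (Sum.inl (i, μ)) f
    | Sum.inr _ => 0 : LocalFn ι n)

/-- Elements of antifield number 1: formal combinations Σ c^{i(μ)} φ*_{i(μ)} of the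
Grassmann-odd antifield generators φ*_{i(μ)} with local-function coefficients. -/
abbrev AF1 (ι : Type) (n : ℕ) : Type := (ι × Multiset (Fin n)) →₀ LocalFn ι n

/-- The Koszul-Tate differential in antifield number 0: δ vanishes on all local
functions of the fields φ^i_{(μ)} (and x). -/
noncomputable def KT0 {ι : Type} {n : ℕ} (_f : LocalFn ι n) : LocalFn ι n := 0

/-- The Koszul-Tate differential in antifield number 1: on a generator it gives
δφ*_{i(μ)} = ∂_{(μ)}(δL/δφ^i), extended with local-function coefficients. -/
noncomputable def KT1 {ι : Type} {n : ℕ} [DecidableEq ι] (L : LocalFn ι n)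
    (m : AF1 ι n) : LocalFn ι n :=
  m.sum fun v c => c * tDm v.2 (EL v.1 L)

/-- The total derivative on antifield-number-1 elements (Leibniz rule, with
∂_ν φ*_{i(μ)} = φ*_{i((μ)ν)}). -/
noncomputable def tD1 {ι : Type} {n : ℕ} [DecidableEq ι] (ν : Fin n)
    (m : AF1 ι n) : AF1 ι n :=
  m.sum fun v c =>
    Finsupp.single v (tD ν c) + Finsupp.single (v.1, ν ::ₘ v.2) c

/-- Iterated total derivatives ∂_{(ν)} on antifield-number-1 elements. -/
noncomputable def tDm1 {ι : Type} {n : ℕ} [DecidableEq ι] (μ : Multiset (Fin n))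
    (m : AF1 ι n) : AF1 ι n :=
  (μ.sort (· ≤ ·)).foldr tD1 m

noncomputable def sfun (ν : Fin n) : JetVar ι n → LocalFn ι n
  | Sum.inl (i, μ) => X (Sum.inl (i, ν ::ₘ μ))
  | Sum.inr _ => 0

lemma tD_eq_sum (ν : Fin n) (f : LocalFn ι n) {S : Finset (JetVar ι n)}
    (hS : f.vars ⊆ S) :
    tD ν f = pderiv (Sum.inr ν) f + ∑ v ∈ S, sfun ν v * pderiv v f := by
  rw [tD]
  congr 1
  have h1 : ∑ v ∈ f.vars,
      (match v with
      | Sum.inl (i, μ) => X (Sum.inl (i, ν ::ₘ μ)) * pderiv (Sum.inl (i, μ)) f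
      | Sum.inr _ => 0 : LocalFn ι n) = ∑ v ∈ f.vars, sfun ν v * pderiv v f := by
    apply Finset.sum_congr rfl
    intro v _
    rcases v with ⟨i, μ⟩ | a
    · rfl
    · simp [sfun]
  rw [h1]
  apply Finset.sum_subset hS
  intro v _ hv
  rw [pderiv_eq_zero_of_notMem_vars hv, mul_zero]

lemma tD_add (ν : Fin n) (p q : LocalFn ι n) : tD ν (p + q) = tD ν p + tD ν q := by
  rw [tD_eq_sum ν (p+q) (vars_add_subset p q),
    tD_eq_sum ν p (Finset.subset_union_left (s₂ := q.vars)),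
    tD_eq_sum ν q (Finset.subset_union_right (s₁ := p.vars))]
  simp only [map_add, mul_add, Finset.sum_add_distrib]
  ring

lemma tD_mul (ν : Fin n) (p q : LocalFn ι n) :
    tD ν (p * q) = tD ν p * q + p * tD ν q := by
  rw [tD_eq_sum ν (p*q) (vars_mul p q),
    tD_eq_sum ν p (Finset.subset_union_left (s₂ := q.vars)),
    tD_eq_sum ν q (Finset.subset_union_right (s₁ := p.vars))]
  have h : ∀ v, sfun (ι := ι) ν v * pderiv v (p * q)
      = (sfun ν v * pderiv v p) * q + p * (sfun ν v * pderiv v q) := by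
    intro v; rw [pderiv_mul]; ring
  simp only [h]
  rw [Finset.sum_add_distrib, ← Finset.sum_mul, ← Finset.mul_sum, pderiv_mul]
  ring

lemma tD_C (ν : Fin n) (a : ℝ) : tD ν (C a : LocalFn ι n) = 0 := by
  rw [tD_eq_sum ν (C a) (Finset.subset_empty.mpr vars_C)]
  simp

lemma tD_zero (ν : Fin n) : tD ν (0 : LocalFn ι n) = 0 := by
  simpa using tD_C (ι := ι) ν 0

lemma tD_one (ν : Fin n) : tD ν (1 : LocalFn ι n) = 0 := by
  simpa using tD_C (ι := ι) ν 1

lemma tD_smul (ν : Fin n) (r : ℝ) (p : LocalFn ι n) : tD ν (r • p) = r • tD ν p := by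
  rw [smul_eq_C_mul, tD_mul, tD_C, smul_eq_C_mul]; ring

noncomputable def tDder (ν : Fin n) : Derivation ℝ (LocalFn ι n) (LocalFn ι n) where
  toLinearMap :=
    { toFun := tD ν
      map_add' := tD_add ν
      map_smul' := tD_smul ν }
  map_one_eq_zero' := tD_one ν
  leibniz' := fun p q => by
    show tD ν (p * q) = p • tD ν q + q • tD ν p
    rw [tD_mul, smul_eq_mul, smul_eq_mul]; ring

lemma tDder_apply (ν : Fin n) (f : LocalFn ι n) : tDder ν f = tD ν f := rfl

lemma tD_X_inl (ν : Fin n) (i : ι) (μ : Multiset (Fin n)) :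
    tD ν (X (Sum.inl (i, μ)) : LocalFn ι n) = X (Sum.inl (i, ν ::ₘ μ)) := by
  rw [tD_eq_sum ν _ (by rw [vars_X] : (X (Sum.inl (i, μ)) : LocalFn ι n).vars ⊆ {Sum.inl (i, μ)})]
  rw [pderiv_X_of_ne (by simp), Finset.sum_singleton, pderiv_X_self]
  simp [sfun]

lemma tD_X_inr (ν : Fin n) (a : Fin n) :
    tD ν (X (Sum.inr a) : LocalFn ι n) = if (Sum.inr ν : JetVar ι n) = Sum.inr a then 1 else 0 := by
  rw [tD_eq_sum ν _ (by rw [vars_X] : (X (Sum.inr a) : LocalFn ι n).vars ⊆ {Sum.inr a})]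
  rw [Finset.sum_singleton]
  simp [sfun, pderiv_X]
  split_ifs <;> simp_all [Pi.single_apply]

lemma tD_comm (ν κ : Fin n) (f : LocalFn ι n) : tD ν (tD κ f) = tD κ (tD ν f) := by
  have h : ⁅tDder (ι := ι) (n := n) ν, tDder (ι := ι) (n := n) κ⁆ = 0 := by
    apply derivation_ext
    intro w
    rw [Derivation.commutator_apply]
    rcases w with ⟨i, μ⟩ | a
    · simp only [tDder_apply, tD_X_inl, Derivation.zero_apply]
      rw [Multiset.cons_swap]; ring
    · simp only [tDder_apply, tD_X_inr, Derivation.zero_apply]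
      split_ifs <;> simp [tD_one, tD_zero]
  have h2 := DFunLike.congr_fun h f
  rw [Derivation.commutator_apply, Derivation.zero_apply, sub_eq_zero] at h2
  exact h2

instance : LeftCommutative (tD (ι := ι) (n := n)) := ⟨tD_comm⟩
lemma tDm_cons (ν : Fin n) (μ : Multiset (Fin n)) (f : LocalFn ι n) :
    tDm (ν ::ₘ μ) f = tD ν (tDm μ f) := by
  rw [tDm, tDm]
  have hp : List.Perm ((ν ::ₘ μ).sort (· ≤ ·)) (ν :: μ.sort (· ≤ ·)) := by
    rw [← Multiset.coe_eq_coe]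
    rw [Multiset.sort_eq, ← Multiset.cons_coe, Multiset.sort_eq]
  rw [hp.foldr_eq]
  rfl

lemma foldr_tD_zero (l : List (Fin n)) : l.foldr tD (0 : LocalFn ι n) = 0 := by
  induction l with
  | nil => rfl
  | cons a l ih => simp [List.foldr_cons, ih, tD_zero]

lemma KT1_zero (L : LocalFn ι n) : KT1 L 0 = 0 := Finsupp.sum_zero_index

lemma KT1_single (L : LocalFn ι n) (v : ι × Multiset (Fin n)) (c : LocalFn ι n) :
    KT1 L (Finsupp.single v c) = c * tDm v.2 (EL v.1 L) :=
  Finsupp.sum_single_index (by simp)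

lemma KT1_add (L : LocalFn ι n) (m₁ m₂ : AF1 ι n) :
    KT1 L (m₁ + m₂) = KT1 L m₁ + KT1 L m₂ :=
  Finsupp.sum_add_index' (fun v => by simp) (fun v c₁ c₂ => add_mul c₁ c₂ _)

lemma tD1_zero (ν : Fin n) : tD1 (ι := ι) ν 0 = 0 := Finsupp.sum_zero_index

lemma tD1_single (ν : Fin n) (v : ι × Multiset (Fin n)) (c : LocalFn ι n) :
    tD1 ν (Finsupp.single v c) =
      Finsupp.single v (tD ν c) + Finsupp.single (v.1, ν ::ₘ v.2) c :=
  Finsupp.sum_single_index (by simp [tD_zero])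

lemma tD1_add (ν : Fin n) (m₁ m₂ : AF1 ι n) :
    tD1 ν (m₁ + m₂) = tD1 ν m₁ + tD1 ν m₂ :=
  Finsupp.sum_add_index' (fun v => by simp [tD_zero])
    (fun v c₁ c₂ => by
      rw [tD_add, Finsupp.single_add, Finsupp.single_add]
      abel)

lemma KT1_tD1 (L : LocalFn ι n) (ν : Fin n) (m : AF1 ι n) :
    KT1 L (tD1 ν m) = tD ν (KT1 L m) := by
  induction m using Finsupp.induction with
  | zero => simp [tD1_zero, KT1_zero, tD_zero]
  | single_add v c m hv hc ih =>
    rw [tD1_add, KT1_add, tD1_single, KT1_add, KT1_single, KT1_add, KT1_single,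
      KT1_single, ih, tD_add, tD_mul, tDm_cons]

lemma KT1_foldr (L : LocalFn ι n) (l : List (Fin n)) (m : AF1 ι n) :
    KT1 L (l.foldr tD1 m) = l.foldr tD (KT1 L m) := by
  induction l with
  | nil => rfl
  | cons a l ih => simp [List.foldr_cons, KT1_tD1, ih]


/-- nilpotency of the Koszul-Tate differential. Given a Lagrangian L and
Noether operators R†^i_α = Σ R†^{i(μ)}_α ∂_{(μ)} satisfying the Noether identities
R†^{i(μ)}_α ∂_{(μ)}(δL/δφ^i) = 0, the odd derivation δ with δφ^i_{(μ)} = 0,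
δφ*_{i(μ)} = ∂_{(μ)}(δL/δφ^i), δC*_{α(ν)} = ∂_{(ν)}(R†^i_α[φ*_i]) squares to zero on
all generators. -/
theorem koszul_tate_nilpotent {ι α : Type} {n : ℕ} [DecidableEq ι]
    (L : LocalFn ι n)
    (R : α → AF1 ι n)
    (noether : ∀ a : α, (R a).sum (fun v c => c * tDm v.2 (EL v.1 L)) = 0) :
    -- δ²φ^i_{(μ)} = 0 and δ²φ*_{i(μ)} = δ(∂_{(μ)}(δL/δφ^i)) = 0 since δ vanishes in
    -- antifield number 0,
    (∀ (i : ι) (μ : Multiset (Fin n)), KT0 (tDm μ (EL i L)) = 0) ∧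
    -- and δ²C*_{α(ν)} = δ(∂_{(ν)}(R†^i_α[φ*_i])) = 0 by the Noether identities:
    (∀ (a : α) (ν : Multiset (Fin n)), KT1 L (tDm1 ν (R a)) = 0) := by
  refine ⟨fun i μ => rfl, fun a ν => ?_⟩
  rw [tDm1, KT1_foldr, show KT1 L (R a) = 0 from noether a]
  exact foldr_tD_zero _
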